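/- arXiv:math/0007108 — 2 statements merged into one kernel-verified Lean document; each statement's English description precedes it below -/
import Mathlib

section
/- For every τ in the complex upper half-plane and every z ∈ ℂ, one has θ(z, τ) = 0 if and only if z ∈ ℤ + τℤ, i.e. if and only if z = m + nτ for some integers m, n. -/
open Complex Real

/-- The Jacobi theta function, defined by the triple product
`θ(z,τ) = exp(πiτ/4) · 2 sin(πz) · ∏_{l≥1} (1-q^l)(1-q^l e^{2πiz})(1-q^l e^{-2πiz})`
where `q = exp(2πiτ)`. -/
noncomputable def jacobiThetaProd (z τ : ℂ) : ℂ :=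
  Complex.exp ((π : ℂ) * I * τ / 4) * (2 * Complex.sin ((π : ℂ) * z)) *
    ∏' l : ℕ,
      (1 - Complex.exp (2 * (π : ℂ) * I * τ) ^ (l + 1)) *
      (1 - Complex.exp (2 * (π : ℂ) * I * τ) ^ (l + 1) * Complex.exp (2 * (π : ℂ) * I * z)) *
      (1 - Complex.exp (2 * (π : ℂ) * I * τ) ^ (l + 1) * Complex.exp (-(2 * (π : ℂ) * I * z)))

/-!
The factors `exp(πiτ/4)` and `2` never vanish, and `sin(πz)` vanishes exactly for `z ∈ ℤ`. Writing
`e(x) = exp(2πix)`, the infinite product splits into three convergent products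
`∏ (1 - e(w + (l+1)τ))` with `w = 0, z, -z`, whose terms are dominated by the geometric series in
`|q| < 1`; such a product vanishes iff one of its factors does, i.e. iff `w + (l+1)τ ∈ ℤ` for some
`l ≥ 0`. For `w = 0` this is impossible as `Im τ > 0`, and the remaining conditions together with
`z ∈ ℤ` describe exactly the lattice `ℤ + τℤ`, according to the sign of the `τ`-coordinate.
-/

section NormedRing

variable {ι R : Type*} [NormedCommRing R] [NormOneClass R] [CompleteSpace R] {a : ι → R}

theorem multipliable_one_sub_of_summable (ha : Summable (‖a ·‖)) :
    Multipliable fun i ↦ 1 - a i := by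
  simpa only [sub_eq_add_neg] using
    multipliable_one_add_of_summable (f := fun i ↦ -a i) (by simpa only [norm_neg] using ha)

theorem tprod_one_sub_eq_zero_iff [NormMulClass R] (ha : Summable (‖a ·‖)) :
    ∏' i, (1 - a i) = 0 ↔ ∃ i, a i = 1 := by
  refine ⟨fun h ↦ ?_, fun ⟨i, hi⟩ ↦ tprod_of_exists_eq_zero ⟨i, by rw [hi, sub_self]⟩⟩
  by_contra! hne
  refine tprod_one_add_ne_zero_of_summable (f := fun i ↦ -a i) (fun i ↦ ?_)
    (by simpa only [norm_neg] using ha) (by simpa only [← sub_eq_add_neg] using h)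
  rw [← sub_eq_add_neg, sub_ne_zero]
  exact (hne i).symm

end NormedRing

theorem exists_intCast_add_intCast_mul_iff {R : Type*} [CommRing R] (z τ : R) :
    (∃ m n : ℤ, z = m + n * τ) ↔ (∃ k : ℤ, z = k) ∨
      (∃ l : ℕ, ∃ k : ℤ, z + (l + 1) * τ = k) ∨ ∃ l : ℕ, ∃ k : ℤ, -z + (l + 1) * τ = k := by
  constructor
  · rintro ⟨m, n, rfl⟩
    obtain ⟨_ | l, rfl | rfl⟩ := n.eq_nat_or_neg
    · exact .inl ⟨m, by simp⟩
    · exact .inl ⟨m, by simp⟩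
    · exact .inr (.inr ⟨l, -m, by push_cast; ring⟩)
    · exact .inr (.inl ⟨l, m, by push_cast; ring⟩)
  · rintro (⟨k, rfl⟩ | ⟨l, k, hk⟩ | ⟨l, k, hk⟩)
    · exact ⟨k, 0, by simp⟩
    · exact ⟨k, -(l + 1), by push_cast; linear_combination hk⟩
    · exact ⟨-k, l + 1, by push_cast; linear_combination -hk⟩

namespace Complex

theorem cexp_two_pi_I_mul_eq_one_iff (x : ℂ) :
    cexp (2 * π * I * x) = 1 ↔ ∃ k : ℤ, x = k := by
  have h2πI : 2 * π * I ≠ 0 := by simp [pi_ne_zero, I_ne_zero]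
  simp only [exp_eq_one_iff, mul_comm (2 * π * I) x, mul_left_inj' h2πI]

theorem sin_pi_mul_eq_zero_iff (x : ℂ) : sin (π * x) = 0 ↔ ∃ k : ℤ, x = k := by
  have hπ : (π : ℂ) ≠ 0 := ofReal_ne_zero.mpr pi_ne_zero
  simp only [sin_eq_zero_iff, mul_comm (π : ℂ) x, mul_left_inj' hπ]

theorem natCast_add_one_mul_ne_intCast {τ : ℂ} (hτ : τ.im ≠ 0) (l : ℕ) (k : ℤ) :
    (l + 1) * τ ≠ k := fun h ↦ by
  simpa [hτ, Nat.cast_add_one_ne_zero] using congrArg im h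

theorem cexp_two_pi_I_mul_pow_mul (τ w : ℂ) (n : ℕ) :
    cexp (2 * π * I * τ) ^ n * cexp (2 * π * I * w) = cexp (2 * π * I * (w + n * τ)) := by
  rw [← exp_nat_mul, ← exp_add]
  ring_nf

theorem norm_cexp_two_pi_I_mul_lt_one {τ : ℂ} (hτ : 0 < τ.im) : ‖cexp (2 * π * I * τ)‖ < 1 := by
  simpa [Function.Periodic.qParam] using Function.Periodic.norm_qParam_lt_one one_pos hτ

theorem summable_norm_cexp_two_pi_I_mul_add_succ_mul {τ : ℂ} (hτ : 0 < τ.im) (w : ℂ) :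
    Summable fun l : ℕ ↦ ‖cexp (2 * π * I * (w + (l + 1) * τ))‖ := by
  have := (summable_geometric_of_lt_one (norm_nonneg _) (norm_cexp_two_pi_I_mul_lt_one hτ)).mul_left
    ‖cexp (2 * π * I * τ) * cexp (2 * π * I * w)‖
  refine this.congr fun l ↦ ?_
  rw [← Nat.cast_add_one, ← cexp_two_pi_I_mul_pow_mul, norm_mul, norm_mul, norm_pow, pow_succ]
  ring

end Complex

theorem jacobiThetaProd_eq_mul_tprod {τ : ℂ} (hτ : 0 < τ.im) (z : ℂ) :
    jacobiThetaProd z τ = cexp (π * I * τ / 4) * (2 * sin (π * z)) *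
      ((∏' l : ℕ, (1 - cexp (2 * π * I * (0 + (l + 1) * τ)))) *
        (∏' l : ℕ, (1 - cexp (2 * π * I * (z + (l + 1) * τ)))) *
        ∏' l : ℕ, (1 - cexp (2 * π * I * (-z + (l + 1) * τ)))) := by
  have hmul (w : ℂ) :=
    multipliable_one_sub_of_summable (summable_norm_cexp_two_pi_I_mul_add_succ_mul hτ w)
  rw [jacobiThetaProd, ← (hmul 0).tprod_mul (hmul z),
    ← ((hmul 0).mul (hmul z)).tprod_mul (hmul (-z))]
  congr with l
  rw [← Nat.cast_add_one]
  simp only [← cexp_two_pi_I_mul_pow_mul, mul_zero, Complex.exp_zero, mul_one, mul_neg]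

/-- Vanishing locus of the Jacobi theta function: `θ(z,τ) = 0` iff `z ∈ ℤ + τℤ`. -/
theorem jacobiTheta_zero_iff (τ : ℂ) (hτ : 0 < τ.im) (z : ℂ) :
    jacobiThetaProd z τ = 0 ↔ ∃ m n : ℤ, z = (m : ℂ) + (n : ℂ) * τ := by
  rw [jacobiThetaProd_eq_mul_tprod hτ, exists_intCast_add_intCast_mul_iff]
  simp only [mul_eq_zero, Complex.exp_ne_zero, two_ne_zero, false_or, sin_pi_mul_eq_zero_iff,
    tprod_one_sub_eq_zero_iff (summable_norm_cexp_two_pi_I_mul_add_succ_mul hτ _),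
    cexp_two_pi_I_mul_eq_one_iff]
  simp only [zero_add, natCast_add_one_mul_ne_intCast hτ.ne', exists_false, false_or]
end

section
/- Let τ lie in the complex upper half-plane and z ∈ ℂ. Let r, s be nonnegative integers, n_1, …, n_r and f_1, …, f_s complex numbers, α_1, …, α_s real numbers, β_1, …, β_s nonnegative integers, and set α̃ := r − 1 + ∑_{k=1}^s α_k·β_k. Define F(t) := [θ(t/(2πi) − (α̃+1)z, τ)/θ(t/(2πi), τ)] · ∏_{l=1}^r [θ((n_l − t)/(2πi) − z, τ)/θ((n_l − t)/(2πi), τ)] · ∏_{k=1}^s [θ((f_k − β_k·t)/(2πi) − (α_k+1)z, τ)/θ((f_k − β_k·t)/(2πi) − z, τ)]. Then for every t ∈ ℂ at which all theta values appearing in the denominators of F(t), F(t + 2πi) and F(t + 2πiτ) are nonzero, one has F(t + 2πi) = F(t) and F(t + 2πiτ) = F(t); that is, F is elliptic with respect to the lattice 2πi(ℤ + τℤ). -/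
open Complex Real

/-! Write `q = e^{2πiτ}`. Shifting `z` by `1` only flips the sign of `sin (π z)`, so
`θ(z + 1) = -θ(z)`. Shifting `z` by `τ` multiplies `x = e^{2πiz}` by `q`: the factor `1 - q x`
drops out of the product over `1 - q^l x`, the factor `1 - x⁻¹` enters the product over
`1 - q^l x⁻¹`, and an identity of the sine prefactor trades one for the other, giving
`θ(z + τ) = -e^{-πiτ - 2πiz} θ(z)`. Hence, for a lattice point `λ = m + kτ`, a quotient
`θ(x + λ) / θ(y + λ)` only picks up the factor `e^{2πik(y - x)}`. The factors of `F` pick up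
`e^{2πikz}` to the powers `α̃ + 1`, `-1` (`r` times) and `-α_j β_j`, whose sum vanishes by the
choice of `α̃`. -/

theorem multipliable_one_sub_pow_succ_mul {q : ℂ} (hq : ‖q‖ < 1) (c : ℂ) :
    Multipliable fun l : ℕ ↦ 1 - q ^ (l + 1) * c := by
  have hgeom : Summable fun l : ℕ ↦ q ^ (l + 1) :=
    (summable_nat_add_iff 1).2 (summable_geometric_of_norm_lt_one hq)
  have hs : Summable fun l : ℕ ↦ -(q ^ (l + 1) * c) := (hgeom.mul_right c).neg
  exact (Complex.multipliable_one_add_of_summable hs).congr fun l ↦ (sub_eq_add_neg _ _).symm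

theorem tprod_one_sub_pow_succ_mul {q : ℂ} (hq : ‖q‖ < 1) (c : ℂ) :
    ∏' l : ℕ, (1 - q ^ (l + 1) * c) = (1 - q * c) * ∏' l : ℕ, (1 - q ^ (l + 1) * (q * c)) := by
  have hshift (l : ℕ) : q ^ (l + 1 + 1) * c = q ^ (l + 1) * (q * c) := by ring
  rw [tprod_eq_zero_mul'
    (by simpa only [hshift] using multipliable_one_sub_pow_succ_mul hq (q * c))]
  simp only [hshift, zero_add, pow_one]

theorem tprod_one_sub_pow_succ_mul_mul {q : ℂ} (hq : ‖q‖ < 1) (x y : ℂ) :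
    ∏' l : ℕ, (1 - q ^ (l + 1)) * (1 - q ^ (l + 1) * x) * (1 - q ^ (l + 1) * y) =
      (∏' l : ℕ, (1 - q ^ (l + 1))) * (∏' l : ℕ, (1 - q ^ (l + 1) * x)) *
        ∏' l : ℕ, (1 - q ^ (l + 1) * y) := by
  have h₁ : Multipliable fun l : ℕ ↦ 1 - q ^ (l + 1) := by
    simpa using multipliable_one_sub_pow_succ_mul hq 1
  have hx := multipliable_one_sub_pow_succ_mul hq x
  rw [(h₁.mul hx).tprod_mul (multipliable_one_sub_pow_succ_mul hq y), h₁.tprod_mul hx]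

theorem two_sin_pi_add_mul_one_sub_exp (z τ : ℂ) :
    2 * Complex.sin (π * (z + τ)) * (1 - cexp (-(2 * π * I * z))) =
      -cexp (-(π * I * τ) - 2 * π * I * z) * (2 * Complex.sin (π * z)) *
        (1 - cexp (2 * π * I * τ) * cexp (2 * π * I * z)) := by
  simp only [Complex.sin]
  field_simp
  simp only [mul_sub, sub_mul, ← Complex.exp_add, mul_one, mul_neg]
  ring_nf

theorem jacobiThetaProd_add_one (z τ : ℂ) : jacobiThetaProd (z + 1) τ = -jacobiThetaProd z τ := by
  have hx : cexp (2 * π * I * (z + 1)) = cexp (2 * π * I * z) := by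
    rw [mul_add, mul_one, Complex.exp_periodic]
  have hy : cexp (-(2 * π * I * (z + 1))) = cexp (-(2 * π * I * z)) := by
    rw [mul_add, mul_one, neg_add, ← sub_eq_add_neg, Complex.exp_periodic.sub_eq]
  have hsin : Complex.sin (π * (z + 1)) = -Complex.sin (π * z) := by
    rw [mul_add, mul_one, Complex.sin_add_pi]
  rw [jacobiThetaProd, jacobiThetaProd, hx, hy, hsin]
  ring

theorem jacobiThetaProd_add_tau {τ : ℂ} (hτ : 0 < τ.im) (z : ℂ) :
    jacobiThetaProd (z + τ) τ = -cexp (-(π * I * τ) - 2 * π * I * z) * jacobiThetaProd z τ := by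
  have hx : cexp (2 * π * I * (z + τ)) = cexp (2 * π * I * τ) * cexp (2 * π * I * z) := by
    rw [mul_add, Complex.exp_add, mul_comm]
  have hy : cexp (-(2 * π * I * (z + τ))) =
      (cexp (2 * π * I * τ))⁻¹ * cexp (-(2 * π * I * z)) := by
    rw [mul_add, neg_add, Complex.exp_add, Complex.exp_neg (2 * π * I * τ), mul_comm]
  have hq := UpperHalfPlane.norm_exp_two_pi_I_lt_one ⟨τ, hτ⟩
  rw [jacobiThetaProd, jacobiThetaProd, hx, hy]
  set q := cexp (2 * π * I * τ)
  simp only [tprod_one_sub_pow_succ_mul_mul hq]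
  rw [tprod_one_sub_pow_succ_mul hq (cexp (2 * π * I * z)),
    tprod_one_sub_pow_succ_mul hq (q⁻¹ * _), mul_inv_cancel_left₀ (Complex.exp_ne_zero _)]
  linear_combination (cexp (π * I * τ / 4) * (∏' l : ℕ, (1 - q ^ (l + 1))) *
    (∏' l : ℕ, (1 - q ^ (l + 1) * (q * cexp (2 * π * I * z)))) *
    ∏' l : ℕ, (1 - q ^ (l + 1) * cexp (-(2 * π * I * z)))) * two_sin_pi_add_mul_one_sub_exp z τ

theorem apply_add_zsmul_of_apply_add {α M : Type*} [AddGroup α] [GroupWithZero M] {R : α → M}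
    {a : α} {c : M} (hc : c ≠ 0) (h : ∀ u, R (u + a) = R u * c) (k : ℤ) (u : α) :
    R (u + k • a) = R u * c ^ k := by
  induction k using Int.induction_on with
  | zero => simp
  | succ k ih => rw [add_zsmul, one_zsmul, ← add_assoc, h, ih, zpow_add_one₀ hc, mul_assoc]
  | pred k ih =>
    have hstep := h (u + (-(k : ℤ) - 1) • a)
    rw [add_assoc, ← add_one_zsmul, sub_add_cancel, ih] at hstep
    rw [zpow_sub_one₀ hc, ← mul_assoc, hstep, mul_inv_cancel_right₀ hc]

theorem jacobiThetaProd_div_add_lattice {τ : ℂ} (hτ : 0 < τ.im) (x y : ℂ) (m k : ℤ) :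
    jacobiThetaProd (x + (m + k * τ)) τ / jacobiThetaProd (y + (m + k * τ)) τ =
      jacobiThetaProd x τ / jacobiThetaProd y τ * cexp (k * (2 * π * I * (y - x))) := by
  set R : ℂ → ℂ := fun u ↦ jacobiThetaProd (x + u) τ / jacobiThetaProd (y + u) τ
  have hone (u : ℂ) : R (u + 1) = R u * 1 := by
    simp only [R, ← add_assoc, jacobiThetaProd_add_one, neg_div_neg_eq, mul_one]
  have htau (u : ℂ) : R (u + τ) = R u * cexp (2 * π * I * (y - x)) := by
    simp only [R, ← add_assoc, jacobiThetaProd_add_tau hτ, mul_div_mul_comm, neg_div_neg_eq,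
      ← Complex.exp_sub]
    rw [mul_comm]
    congr 2
    ring
  have hR := apply_add_zsmul_of_apply_add (Complex.exp_ne_zero _) htau k (0 + m • 1)
  rw [apply_add_zsmul_of_apply_add one_ne_zero hone, one_zpow, mul_one] at hR
  simpa [R, Complex.exp_int_mul] using hR

noncomputable def ellipticIntegrand (τ z αt : ℂ) {r s : ℕ} (n : Fin r → ℂ) (f : Fin s → ℂ)
    (α : Fin s → ℂ) (β : Fin s → ℕ) (t : ℂ) : ℂ :=
  jacobiThetaProd (t / (2 * π * I) - (αt + 1) * z) τ / jacobiThetaProd (t / (2 * π * I)) τ *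
    (∏ l : Fin r,
      jacobiThetaProd ((n l - t) / (2 * π * I) - z) τ /
        jacobiThetaProd ((n l - t) / (2 * π * I)) τ) *
    ∏ k : Fin s,
      jacobiThetaProd ((f k - β k * t) / (2 * π * I) - (α k + 1) * z) τ /
        jacobiThetaProd ((f k - β k * t) / (2 * π * I) - z) τ

theorem ellipticIntegrand_add_lattice {τ : ℂ} (hτ : 0 < τ.im) (z αt : ℂ) {r s : ℕ}
    (n : Fin r → ℂ) (f : Fin s → ℂ) (α : Fin s → ℂ) (β : Fin s → ℕ)
    (hαt : αt = r - 1 + ∑ k, α k * β k) (m k : ℤ) (t : ℂ) :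
    ellipticIntegrand τ z αt n f α β (t + 2 * π * I * (m + k * τ)) =
      ellipticIntegrand τ z αt n f α β t := by
  have harg : (t + 2 * π * I * (m + k * τ)) / (2 * π * I) = t / (2 * π * I) + (m + k * τ) := by
    field_simp
  have harg' (a : ℂ) (p : ℕ) : (a - p * (t + 2 * π * I * (m + k * τ))) / (2 * π * I) =
      (a - p * t) / (2 * π * I) + (((-(p * m) : ℤ) : ℂ) + ((-(p * k) : ℤ) : ℂ) * τ) := by
    push_cast
    field_simp
    ring
  have harg₁ (a : ℂ) : (a - (t + 2 * π * I * (m + k * τ))) / (2 * π * I) =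
      (a - t) / (2 * π * I) + (((-m : ℤ) : ℂ) + ((-k : ℤ) : ℂ) * τ) := by
    simpa using harg' a 1
  have hsum : ∑ j, ((-(β j * k) : ℤ) : ℂ) * (2 * π * I * ((α j + 1) * z - z)) =
      -(k * (2 * π * I * z)) * ∑ j, α j * β j := by
    rw [Finset.mul_sum]
    exact Finset.sum_congr rfl fun j _ ↦ by push_cast; ring
  have hmult : cexp (k * (2 * π * I * ((αt + 1) * z))) *
      cexp (((-k : ℤ) : ℂ) * (2 * π * I * z)) ^ r *
      ∏ j, cexp (((-(β j * k) : ℤ) : ℂ) * (2 * π * I * ((α j + 1) * z - z))) = 1 := by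
    rw [← Complex.exp_nat_mul, ← Complex.exp_sum, ← Complex.exp_add, ← Complex.exp_add, hsum,
      hαt, ← Complex.exp_zero]
    push_cast
    ring_nf
  rw [← mul_one (ellipticIntegrand τ z αt n f α β t), ← hmult]
  simp only [ellipticIntegrand, harg, harg₁, harg', add_sub_right_comm,
    jacobiThetaProd_div_add_lattice hτ, sub_sub_cancel, sub_sub_sub_cancel_left,
    Finset.prod_mul_distrib, Finset.prod_const, Finset.card_univ, Fintype.card_fin]
  ring

theorem F_elliptic_general (τ z : ℂ) (hτ : 0 < τ.im) (r s : ℕ) (n : Fin r → ℂ) (f : Fin s → ℂ)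
    (α : Fin s → ℝ) (β : Fin s → ℕ) (αt : ℝ)
    (hαt : αt = (r : ℝ) - 1 + ∑ k, α k * (β k : ℝ))
    (F : ℂ → ℂ)
    (hF : ∀ t : ℂ, F t =
      jacobiThetaProd (t / (2 * (π : ℂ) * I) - ((αt : ℂ) + 1) * z) τ /
          jacobiThetaProd (t / (2 * (π : ℂ) * I)) τ *
        (∏ l : Fin r,
          jacobiThetaProd ((n l - t) / (2 * (π : ℂ) * I) - z) τ /
            jacobiThetaProd ((n l - t) / (2 * (π : ℂ) * I)) τ) *
        ∏ k : Fin s,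
          jacobiThetaProd ((f k - (β k : ℂ) * t) / (2 * (π : ℂ) * I) - (((α k : ℂ)) + 1) * z) τ /
            jacobiThetaProd ((f k - (β k : ℂ) * t) / (2 * (π : ℂ) * I) - z) τ)
    (t : ℂ) :
    F (t + 2 * (π : ℂ) * I) = F t ∧ F (t + 2 * (π : ℂ) * I * τ) = F t := by
  obtain rfl : F = ellipticIntegrand τ z αt n f (fun k ↦ α k) β := funext hF
  have hαt' : (αt : ℂ) = r - 1 + ∑ k, (α k : ℂ) * β k := by exact_mod_cast hαt
  have hperiodic := ellipticIntegrand_add_lattice hτ z αt n f (fun k ↦ α k) β hαt'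
  exact ⟨by simpa using hperiodic 1 0 t, by simpa using hperiodic 0 1 t⟩

/-- Ellipticity of the integrand in the proof of the independence of the singular elliptic
genus on the resolution: the function `F` below is periodic with respect to the lattice
`2πi(ℤ + τℤ)`, at all points where the denominator theta values are nonzero. -/
theorem F_elliptic (τ z : ℂ) (hτ : 0 < τ.im) (r s : ℕ) (n : Fin r → ℂ) (f : Fin s → ℂ)
    (α : Fin s → ℝ) (β : Fin s → ℕ) (αt : ℝ)
    (hαt : αt = (r : ℝ) - 1 + ∑ k, α k * (β k : ℝ))
    (F : ℂ → ℂ)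
    (hF : ∀ t : ℂ, F t =
      jacobiThetaProd (t / (2 * (π : ℂ) * I) - ((αt : ℂ) + 1) * z) τ /
          jacobiThetaProd (t / (2 * (π : ℂ) * I)) τ *
        (∏ l : Fin r,
          jacobiThetaProd ((n l - t) / (2 * (π : ℂ) * I) - z) τ /
            jacobiThetaProd ((n l - t) / (2 * (π : ℂ) * I)) τ) *
        ∏ k : Fin s,
          jacobiThetaProd ((f k - (β k : ℂ) * t) / (2 * (π : ℂ) * I) - (((α k : ℂ)) + 1) * z) τ /
            jacobiThetaProd ((f k - (β k : ℂ) * t) / (2 * (π : ℂ) * I) - z) τ)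
    (D : ℂ → Prop)
    (hD : ∀ t : ℂ, D t ↔
      jacobiThetaProd (t / (2 * (π : ℂ) * I)) τ ≠ 0 ∧
      (∀ l : Fin r, jacobiThetaProd ((n l - t) / (2 * (π : ℂ) * I)) τ ≠ 0) ∧
      (∀ k : Fin s,
        jacobiThetaProd ((f k - (β k : ℂ) * t) / (2 * (π : ℂ) * I) - z) τ ≠ 0))
    (t : ℂ) (h1 : D t) (h2 : D (t + 2 * (π : ℂ) * I)) (h3 : D (t + 2 * (π : ℂ) * I * τ)) :
    F (t + 2 * (π : ℂ) * I) = F t ∧ F (t + 2 * (π : ℂ) * I * τ) = F t :=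
  F_elliptic_general τ z hτ r s n f α β αt hαt F hF t
end
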